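/- Let t and k be integers with 0 <= t <= min(r_n, s_n) and 1 <= k <= max(e,0), and suppose l = t p^n + k satisfies max(r+s-p^{n+1},0)+1 <= l <= min(r,s). Then: (1) the element z_l = (-1)^{R-k} sum_{i=0}^{t} (-1)^i v_{i p^n + R + 1 - k, (t-i) p^n + S} of M(r,s) satisfies T^{p^n - 1}(z_l) = x_{(t-1) p^n + R + S + 1 - k}; (2) the (t+1) x (t+1) matrix M(1) over F with (i,j) entry C(r_n+s_n-2t, r_n-t+j-i) is invertible, and with zeta = M(1)^{-1} X, where X is the column vector of length t+1 with i-th entry (-1)^{i-1}, the element y_l = (-1)^{R-k} sum_{i=0}^{t} zeta_{i+1} v_{(r_n-t+i) p^n + R + 1 - k, (s_n-i) p^n + S} satisfies T^{(r_n+s_n-2t) p^n}(y_l) = z_l. -/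

import Mathlib

open scoped BigOperators

noncomputable section

/-- The basis vector `v_{a,b}` of `M(r,s)` (1-indexed), read as `0` when
`a` or `b` is out of range. -/
def vv (F : Type*) [Field F] (r s : ℕ) (a b : ℤ) : Matrix (Fin r) (Fin s) F :=
  Matrix.of fun i j => if (i : ℤ) + 1 = a ∧ (j : ℤ) + 1 = b then 1 else 0

/-- The linear endomorphism `T` of `M(r,s)` with `T(v_{i,j}) = v_{i-1,j} + v_{i,j-1}`
(out-of-range symbols read as `0`); it models the action of `g - 1`. -/
def TT (F : Type*) [Field F] (r s : ℕ) :
    Matrix (Fin r) (Fin s) F →ₗ[F] Matrix (Fin r) (Fin s) F where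
  toFun A := Matrix.of fun i j =>
    (if h : (i : ℕ) + 1 < r then A ⟨(i : ℕ) + 1, h⟩ j else 0) +
    (if h : (j : ℕ) + 1 < s then A i ⟨(j : ℕ) + 1, h⟩ else 0)
  map_add' A B := by
    ext i j
    simp only [Matrix.of_apply, Matrix.add_apply]
    split_ifs <;> abel
  map_smul' c A := by
    ext i j
    simp only [Matrix.of_apply, Matrix.smul_apply, RingHom.id_apply, smul_eq_mul]
    split_ifs <;> ring

/-- `x_m = ∑_{j=1}^m (-1)^{j-1} v_{j, m+1-j}` (the empty sum if `m ≤ 0`). -/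
def xx (F : Type*) [Field F] (r s : ℕ) (m : ℤ) : Matrix (Fin r) (Fin s) F :=
  ∑ j ∈ Finset.range m.toNat, ((-1 : F) ^ j) • vv F r s ((j : ℤ) + 1) (m - j)

/-- The subspace `D_d` of `M(r,s)`, spanned by the `v_{i,j}` with `i + j = d + 1`. -/
def Dd (F : Type*) [Field F] (r s : ℕ) (d : ℕ) :
    Submodule F (Matrix (Fin r) (Fin s) F) :=
  Submodule.span F { A | ∃ a b : ℕ, 1 ≤ a ∧ a ≤ r ∧ 1 ≤ b ∧ b ≤ s ∧
    a + b = d + 1 ∧ A = vv F r s (a : ℤ) (b : ℤ) }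

/-- Binomial coefficient `C(a,b)` as an element of `F`, with the convention that
it is `0` when `b < 0` or `b > a`. -/
def binF (F : Type*) [Field F] (a b : ℤ) : F :=
  if 0 ≤ b ∧ b ≤ a then (Nat.choose a.toNat b.toNat : F) else 0

/-- `lam` (restricted to indices `1,…,min r s`) is the Jordan type of the nilpotent
operator `T` on `M(r,s)`: a nonincreasing list of `min r s` positive integers such that
for each `m ≥ 1` the number of parts `≥ m` is `rank T^{m-1} - rank T^m`. -/
def IsJordanType (F : Type*) [Field F] (r s : ℕ) (lam : ℕ → ℕ) : Prop :=
  (∀ l, 1 ≤ l → l ≤ min r s → 0 < lam l) ∧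
  (∀ l l', 1 ≤ l → l ≤ l' → l' ≤ min r s → lam l' ≤ lam l) ∧
  ∀ m, 1 ≤ m →
    ((Finset.Icc 1 (min r s)).filter fun l => m ≤ lam l).card =
      Module.finrank F ↥(LinearMap.range ((TT F r s) ^ (m - 1))) -
      Module.finrank F ↥(LinearMap.range ((TT F r s) ^ m))

/-!
Write `T = L₁ + L₂` with the commuting shifts `L₁ v_{a,b} = v_{a-1,b}`, `L₂ v_{a,b} = v_{a,b-1}`, so
`T^N v_{a,b} = ∑_u C(N,u) v_{a-u, b-N+u}`. In characteristic `p`, `C(p^n - 1, u) = (-1)^u` for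
`u < p^n`, and `T^{p^n} = L₁^{p^n} + L₂^{p^n}`.

(1) `T^{p^n-1}` turns the `i`-th summand of `z_l` into `p^n` consecutive alternating terms of a single
antidiagonal; for `i = 0, …, t` these stretches tile `x_m`, up to terms outside the rectangle.

(3) `T^{a p^n}`, `a = r_n + s_n - 2t`, maps `∑ ζᵢ v_{(r_n-t+i)p^n + R+1-k, (s_n-i)p^n + S}` to
`∑_c (M(1) ζ)_c v_{c p^n + R+1-k, (t-c)p^n + S}`, which is `z_l` up to the sign `(-1)^{R-k}` once
`M(1) ζ = X`.

(2) The lower bound on `l` gives `a + t < p`. If `v M(1) = 0`, then `(∑ vᵢ Xⁱ)(X + 1)^a` has degree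
`≤ a + t`, is divisible by `(X + 1)^a` and has at most `a` monomials, so it vanishes by Hajós' lemma.
-/

theorem neg_one_pow_sub {R : Type*} [CommRing R] {a b : ℕ} (h : b ≤ a) :
    (-1 : R) ^ (a - b) = (-1) ^ a * (-1) ^ b := by
  conv_rhs => rw [← Nat.sub_add_cancel h, pow_add, mul_assoc, ← pow_add, ← two_mul, pow_mul]
  simp

theorem Finset.sum_range_mul {M : Type*} [AddCommMonoid M] (f : ℕ → M) (m q : ℕ) :
    ∑ j ∈ range (m * q), f j = ∑ i ∈ range m, ∑ u ∈ range q, f (i * q + u) := by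
  induction m with
  | zero => simp
  | succ m ih => rw [Nat.succ_mul, sum_range_add, ih, sum_range_succ]

section Binomial

variable {F : Type*} [Field F]

theorem choose_char_pow_sub_one (p : ℕ) [hp : Fact p.Prime] [CharP F p] (n : ℕ) {u : ℕ}
    (hu : u < p ^ n) : ((p ^ n - 1).choose u : F) = (-1) ^ u := by
  induction u with
  | zero => simp
  | succ u ih =>
    have hpn : p ^ n = (p ^ n - 1) + 1 := (Nat.sub_add_cancel (by omega)).symm
    have hvanish : ((p ^ n).choose (u + 1) : F) = 0 :=
      (CharP.cast_eq_zero_iff F p _).mpr (hp.out.dvd_choose_pow (by omega) (by omega))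
    rw [hpn, Nat.choose_succ_succ, Nat.cast_add, ih (by omega)] at hvanish
    rw [pow_succ]
    linear_combination hvanish

theorem binF_natCast (a m : ℕ) : binF F a m = a.choose m := by
  by_cases h : m ≤ a
  · simp [binF, h]
  · simp [binF, Nat.choose_eq_zero_of_lt (not_le.mp h), h]

theorem binF_of_neg (a : ℤ) {b : ℤ} (hb : b < 0) : binF F a b = 0 := by
  simp [binF, not_le.mpr hb]

theorem sum_range_choose_ite_eq (a : ℕ) (b : ℤ) :
    ∑ w ∈ Finset.range (a + 1), (if (w : ℤ) = b then (a.choose w : F) else 0) =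
      binF F a b := by
  rcases lt_or_ge b 0 with hb | hb
  · rw [binF_of_neg _ hb]
    exact Finset.sum_eq_zero fun w _ => if_neg (by omega)
  · lift b to ℕ using hb
    simp only [Nat.cast_inj, Finset.sum_ite_eq', Finset.mem_range, binF_natCast]
    split_ifs with h
    · rfl
    · rw [Nat.choose_eq_zero_of_lt (by omega), Nat.cast_zero]

theorem sum_range_choose_smul_eq_sum_binF_smul {M : Type*} [AddCommGroup M] [Module F M]
    (a t : ℕ) (m : ℤ) (B : ℤ → M) (hB : ∀ c, c < 0 ∨ (t : ℤ) < c → B c = 0) :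
    ∑ w ∈ Finset.range (a + 1), (a.choose w : F) • B (m - w) =
      ∑ c : Fin (t + 1), binF F a (m - c) • B c := by
  have hB_eq_sum : ∀ e : ℤ, B e = ∑ c : Fin (t + 1), if (c : ℤ) = e then B c else 0 := by
    intro e
    by_cases he : 0 ≤ e ∧ e ≤ t
    · obtain ⟨k, rfl⟩ := Int.eq_ofNat_of_zero_le he.1
      rw [Fintype.sum_eq_single ⟨k, by omega⟩
        fun c hc => if_neg fun h => hc (Fin.ext (by simpa using h))]
      simp
    · rw [hB e (by omega)]
      exact (Finset.sum_eq_zero fun c _ => if_neg (by have := c.isLt; omega)).symm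
  calc ∑ w ∈ Finset.range (a + 1), (a.choose w : F) • B (m - w)
      = ∑ w ∈ Finset.range (a + 1), ∑ c : Fin (t + 1),
          (if (w : ℤ) = m - c then (a.choose w : F) else 0) • B c := by
        refine Finset.sum_congr rfl fun w _ => ?_
        rw [hB_eq_sum (m - w), Finset.smul_sum]
        refine Finset.sum_congr rfl fun c _ => ?_
        by_cases h : (c : ℤ) = m - w
        · rw [if_pos h, if_pos (by omega)]
        · rw [if_neg h, if_neg (by omega), zero_smul, smul_zero]
    _ = ∑ c : Fin (t + 1), binF F a (m - c) • B c := by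
        rw [Finset.sum_comm]
        simp_rw [← Finset.sum_smul, sum_range_choose_ite_eq]

end Binomial

namespace Polynomial

variable {F : Type*} [Field F]

theorem coeff_X_pow_mul_X_add_one_pow (a e d : ℕ) :
    ((X : F[X]) ^ e * (X + 1) ^ a).coeff d = binF F a ((d : ℤ) - e) := by
  rw [coeff_X_pow_mul', coeff_X_add_one_pow]
  split_ifs with h
  · rw [← Nat.cast_sub h, binF_natCast]
  · rw [binF_of_neg _ (by omega)]

theorem coeff_sum_fin_C_mul_X_pow {t : ℕ} (v : Fin (t + 1) → F) (i : Fin (t + 1)) :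
    (∑ j, C (v j) * X ^ (j : ℕ)).coeff i = v i := by
  rw [finsetSum_coeff, Fintype.sum_eq_single i]
  · simp
  · intro j hji
    rw [coeff_C_mul_X_pow, if_neg (Fin.val_ne_of_ne hji.symm)]

theorem natDegree_eq_zero_of_derivative_eq_zero_of_natDegree_lt (p : ℕ) [CharP F p] {f : F[X]}
    (hf : derivative f = 0) (hdeg : f.natDegree < p) : f.natDegree = 0 := by
  by_contra hne
  have hcoeff := congrArg (coeff · (f.natDegree - 1)) hf
  simp only [coeff_derivative, Nat.sub_add_cancel (Nat.pos_of_ne_zero hne), coeff_zero] at hcoeff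
  have hlead : f.leadingCoeff ≠ 0 := leadingCoeff_ne_zero.mpr (by rintro rfl; simp at hne)
  have hcast : ((f.natDegree - 1 : ℕ) : F) + 1 ≠ 0 := by
    rw [← Nat.cast_add_one, Nat.sub_add_cancel (Nat.pos_of_ne_zero hne), Ne,
      CharP.cast_eq_zero_iff F p]
    exact fun hdvd => hne (Nat.eq_zero_of_dvd_of_lt hdvd hdeg)
  exact mul_ne_zero hlead hcast hcoeff

theorem card_support_derivative_lt {f : F[X]} (hf : f.coeff 0 ≠ 0) :
    (derivative f).support.card < f.support.card := by
  have hmaps : Set.MapsTo (· + 1) (derivative f).support (f.support.erase 0) := fun i hi => by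
    simp only [Finset.mem_coe, mem_support_iff, coeff_derivative] at hi
    exact Finset.mem_erase.mpr
      ⟨Nat.succ_ne_zero i, mem_support_iff.mpr (left_ne_zero_of_mul hi)⟩
  calc (derivative f).support.card ≤ (f.support.erase 0).card :=
        Finset.card_le_card_of_injOn _ hmaps (add_left_injective 1).injOn
    _ < f.support.card := Finset.card_erase_lt_of_mem (mem_support_iff.mpr hf)

theorem card_support_le_card_support_X_pow_mul (m : ℕ) (f : F[X]) :
    f.support.card ≤ (X ^ m * f).support.card :=
  Finset.card_le_card_of_injOn (· + m)
    (fun i hi => by simpa only [Finset.mem_coe, mem_support_iff, coeff_X_pow_mul] using hi)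
    (add_left_injective m).injOn

/-- Hajós' lemma, in characteristic `p` for polynomials of degree `< p`. -/
theorem lt_card_support_of_pow_X_sub_C_dvd (p : ℕ) [CharP F p] {c : F} (hc : c ≠ 0) (a : ℕ)
    {g : F[X]} (hg : g ≠ 0) (hdeg : g.natDegree < p) (hdvd : (X - C c) ^ a ∣ g) :
    a < g.support.card := by
  induction a generalizing g with
  | zero => exact Finset.card_pos.mpr (nonempty_support_iff.mpr hg)
  | succ a ih =>
    obtain ⟨f, hgf, hXf⟩ := exists_eq_pow_rootMultiplicity_mul_and_not_dvd g hg 0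
    simp only [map_zero, sub_zero] at hgf hXf
    have hf0 : f.coeff 0 ≠ 0 := fun h0 => hXf (X_dvd_iff.mpr h0)
    have hf : f ≠ 0 := by rintro rfl; simp at hf0
    have hdvd_f : (X - C c) ^ (a + 1) ∣ f := by
      have hcop : IsCoprime ((X - C c) ^ (a + 1)) (X ^ rootMultiplicity 0 g) := by
        refine IsCoprime.pow ?_
        simpa using isCoprime_X_sub_C_of_isUnit_sub (R := F) (b := 0) (by simpa using hc)
      exact hcop.dvd_of_dvd_mul_left (hgf ▸ hdvd)
    have hdeg_f : f.natDegree < p :=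
      (natDegree_le_of_dvd ⟨_, hgf.trans (mul_comm _ _)⟩ hg).trans_lt hdeg
    have hder : derivative f ≠ 0 := by
      intro hd
      have hconst := natDegree_eq_zero_of_derivative_eq_zero_of_natDegree_lt p hd hdeg_f
      have := natDegree_le_of_dvd hdvd_f hf
      rw [natDegree_pow, natDegree_X_sub_C] at this
      omega
    have hcard_der : a < (derivative f).support.card :=
      ih hder ((natDegree_derivative_le f).trans_lt (by omega))
        (by simpa using pow_sub_one_dvd_derivative_of_pow_dvd hdvd_f)
    have hcard_f := card_support_derivative_lt hf0
    have hcard_g : f.support.card ≤ g.support.card :=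
      (card_support_le_card_support_X_pow_mul _ f).trans_eq (by rw [← hgf])
    omega

end Polynomial

section ToeplitzBinomial

open Polynomial

variable {F : Type*} [Field F]

theorem isUnit_binF_toeplitz (p : ℕ) [CharP F p] {a c t : ℕ} (hc : c ≤ a) (hp : a + t < p) :
    IsUnit (Matrix.of fun i j : Fin (t + 1) => binF F a ((c : ℤ) + j - i)) := by
  rw [Matrix.isUnit_iff_isUnit_det, isUnit_iff_ne_zero]
  intro hdet
  obtain ⟨v, hv, hvM⟩ := Matrix.exists_vecMul_eq_zero_iff.mpr hdet
  set f : F[X] := ∑ j, C (v j) * X ^ (j : ℕ) with hf_def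
  set g : F[X] := f * (X + 1) ^ a with hg_def
  have hf : f ≠ 0 := fun hf0 => hv (funext fun i => by
    rw [← coeff_sum_fin_C_mul_X_pow v i, ← hf_def, hf0, coeff_zero, Pi.zero_apply])
  have hX1 : (X + 1 : F[X]) ≠ 0 := by simpa using X_add_C_ne_zero (1 : F)
  have hg : g ≠ 0 := mul_ne_zero hf (pow_ne_zero _ hX1)
  have hdeg_f : f.natDegree ≤ t := natDegree_sum_le_of_forall_le _ _ fun j _ =>
    (natDegree_C_mul_X_pow_le _ _).trans (Nat.lt_succ_iff.mp j.isLt)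
  have hdeg_g : g.natDegree ≤ a + t := by
    rw [hg_def, natDegree_mul hf (pow_ne_zero _ hX1), natDegree_pow, ← C_1, natDegree_X_add_C]
    omega
  have hgap : ∀ d, c ≤ d → d ≤ c + t → g.coeff d = 0 := by
    intro d hcd hdt
    have hj := congrFun hvM ⟨d - c, by omega⟩
    simp only [Matrix.vecMul, dotProduct, Matrix.of_apply, Pi.zero_apply] at hj
    rw [hg_def, hf_def, Finset.sum_mul, finsetSum_coeff, ← hj]
    refine Finset.sum_congr rfl fun i _ => ?_
    rw [mul_assoc, coeff_C_mul, coeff_X_pow_mul_X_add_one_pow]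
    congr 2
    push_cast [Nat.cast_sub hcd]
    ring
  have hsupp : g.support ⊆ Finset.range (a + t + 1) \ Finset.Icc c (c + t) := fun d hd => by
    have hd' := mem_support_iff.mp hd
    simp only [Finset.mem_sdiff, Finset.mem_range, Finset.mem_Icc]
    exact ⟨by have := le_natDegree_of_ne_zero hd'; omega, fun h => hd' (hgap d h.1 h.2)⟩
  have hcard : g.support.card ≤ a := by
    refine (Finset.card_le_card hsupp).trans ?_
    rw [Finset.card_sdiff_of_subset fun d hd => by simp at hd ⊢; omega, Finset.card_range,
      Nat.card_Icc]
    omega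
  have hdvd : (X - C (-1)) ^ a ∣ g :=
    ⟨f, by rw [hg_def, map_neg, C_1, sub_neg_eq_add, mul_comm]⟩
  have := lt_card_support_of_pow_X_sub_C_dvd p (neg_ne_zero.mpr one_ne_zero) a hg (by omega) hdvd
  omega

end ToeplitzBinomial

section OperatorT

variable {F : Type*} [Field F] {r s : ℕ}

variable (F r s) in
def shiftRow : Matrix (Fin r) (Fin s) F →ₗ[F] Matrix (Fin r) (Fin s) F where
  toFun A := Matrix.of fun i j => if h : (i : ℕ) + 1 < r then A ⟨(i : ℕ) + 1, h⟩ j else 0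
  map_add' A B := by ext i j; simp only [Matrix.of_apply, Matrix.add_apply]; split_ifs <;> simp
  map_smul' c A := by ext i j; simp only [Matrix.of_apply, Matrix.smul_apply]; split_ifs <;> simp

variable (F r s) in
def shiftCol : Matrix (Fin r) (Fin s) F →ₗ[F] Matrix (Fin r) (Fin s) F where
  toFun A := Matrix.of fun i j => if h : (j : ℕ) + 1 < s then A i ⟨(j : ℕ) + 1, h⟩ else 0
  map_add' A B := by ext i j; simp only [Matrix.of_apply, Matrix.add_apply]; split_ifs <;> simp
  map_smul' c A := by ext i j; simp only [Matrix.of_apply, Matrix.smul_apply]; split_ifs <;> simp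

variable (F r s) in
theorem TT_eq_shiftRow_add_shiftCol : TT F r s = shiftRow F r s + shiftCol F r s := rfl

variable (F r s) in
theorem commute_shiftRow_shiftCol : Commute (shiftRow F r s) (shiftCol F r s) := by
  ext A i j
  simp only [Module.End.mul_apply, shiftRow, shiftCol, LinearMap.coe_mk, AddHom.coe_mk,
    Matrix.of_apply]
  split_ifs <;> rfl

theorem vv_eq_zero_of_fst_nonpos {a : ℤ} (b : ℤ) (ha : a ≤ 0) : vv F r s a b = 0 := by
  ext i j
  simp only [vv, Matrix.of_apply, Matrix.zero_apply, ite_eq_right_iff, and_imp]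
  omega

theorem vv_eq_zero_of_snd_nonpos (a : ℤ) {b : ℤ} (hb : b ≤ 0) : vv F r s a b = 0 := by
  ext i j
  simp only [vv, Matrix.of_apply, Matrix.zero_apply, ite_eq_right_iff, and_imp]
  omega

theorem shiftRow_vv {a : ℤ} (b : ℤ) (ha : a ≤ r) :
    shiftRow F r s (vv F r s a b) = vv F r s (a - 1) b := by
  ext i j
  simp only [shiftRow, vv, LinearMap.coe_mk, AddHom.coe_mk, Matrix.of_apply]
  split_ifs <;> first | rfl | (exfalso; omega)

theorem shiftCol_vv (a : ℤ) {b : ℤ} (hb : b ≤ s) :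
    shiftCol F r s (vv F r s a b) = vv F r s a (b - 1) := by
  ext i j
  simp only [shiftCol, vv, LinearMap.coe_mk, AddHom.coe_mk, Matrix.of_apply]
  split_ifs <;> first | rfl | (exfalso; omega)

theorem shiftRow_pow_vv (u : ℕ) {a : ℤ} (b : ℤ) (ha : a ≤ r) :
    (shiftRow F r s ^ u) (vv F r s a b) = vv F r s (a - u) b := by
  induction u with
  | zero => simp
  | succ u ih =>
    rw [pow_succ', Module.End.mul_apply, ih, shiftRow_vv b (by omega)]
    push_cast; ring_nf

theorem shiftCol_pow_vv (u : ℕ) (a : ℤ) {b : ℤ} (hb : b ≤ s) :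
    (shiftCol F r s ^ u) (vv F r s a b) = vv F r s a (b - u) := by
  induction u with
  | zero => simp
  | succ u ih =>
    rw [pow_succ', Module.End.mul_apply, ih, shiftCol_vv a (by omega)]
    push_cast; ring_nf

theorem shiftRow_pow_mul_shiftCol_pow_vv (u v : ℕ) {a b : ℤ} (ha : a ≤ r) (hb : b ≤ s) :
    (shiftRow F r s ^ u * shiftCol F r s ^ v) (vv F r s a b) = vv F r s (a - u) (b - v) := by
  rw [Module.End.mul_apply, shiftCol_pow_vv v a hb, shiftRow_pow_vv u _ ha]

theorem TT_pow_vv (N : ℕ) {a b : ℤ} (ha : a ≤ r) (hb : b ≤ s) :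
    (TT F r s ^ N) (vv F r s a b) =
      ∑ u ∈ Finset.range (N + 1),
        (N.choose u : F) • vv F r s (a - u) (b - (N - u : ℕ)) := by
  rw [TT_eq_shiftRow_add_shiftCol, (commute_shiftRow_shiftCol F r s).add_pow, LinearMap.sum_apply]
  refine Finset.sum_congr rfl fun u _ => ?_
  rw [Module.End.mul_apply, Module.End.natCast_apply, map_nsmul,
    shiftRow_pow_mul_shiftCol_pow_vv u _ ha hb, Nat.cast_smul_eq_nsmul]

theorem TT_pow_char_pow (p : ℕ) [Fact p.Prime] [CharP F p] [NeZero r] [NeZero s] (n : ℕ) :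
    TT F r s ^ p ^ n = shiftRow F r s ^ p ^ n + shiftCol F r s ^ p ^ n := by
  -- `F` acts faithfully on the matrix space since `r, s ≠ 0`
  have : CharP (Module.End F (Matrix (Fin r) (Fin s) F)) p := charP_of_injective_algebraMap' F p
  rw [TT_eq_shiftRow_add_shiftCol,
    add_pow_char_pow_of_commute _ _ (commute_shiftRow_shiftCol F r s)]

theorem TT_pow_mul_char_pow_vv (p : ℕ) [Fact p.Prime] [CharP F p] [NeZero r] [NeZero s]
    (m n : ℕ) {a b : ℤ} (ha : a ≤ r) (hb : b ≤ s) :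
    (TT F r s ^ (m * p ^ n)) (vv F r s a b) =
      ∑ w ∈ Finset.range (m + 1),
        (m.choose w : F) • vv F r s (a - w * p ^ n) (b - (m - w : ℕ) * p ^ n) := by
  rw [mul_comm, pow_mul, TT_pow_char_pow p n,
    ((commute_shiftRow_shiftCol F r s).pow_pow _ _).add_pow, LinearMap.sum_apply]
  refine Finset.sum_congr rfl fun w _ => ?_
  rw [Module.End.mul_apply, Module.End.natCast_apply, map_nsmul, ← pow_mul, ← pow_mul,
    shiftRow_pow_mul_shiftCol_pow_vv _ _ ha hb, Nat.cast_smul_eq_nsmul]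
  push_cast; ring_nf

theorem TT_pow_char_pow_sub_one_smul_sum_vv (p : ℕ) [Fact p.Prime] [CharP F p] (n : ℕ)
    {t R S k : ℕ} (hk : k ≤ R) (hR : R < p ^ n) (hS : S ≤ p ^ n)
    (hRS : p ^ n + k ≤ R + S + 1)
    (hr : t * p ^ n + R + 1 ≤ r + k) (hs : t * p ^ n + S ≤ s) :
    (TT F r s ^ (p ^ n - 1)) ((-1 : F) ^ (R - k) •
        ∑ i ∈ Finset.range (t + 1), (-1 : F) ^ i •
          vv F r s ((i : ℤ) * p ^ n + R + 1 - k) (((t : ℤ) - i) * p ^ n + S)) =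
      xx F r s (((t : ℤ) - 1) * p ^ n + R + S + 1 - k) := by
  set q := p ^ n
  have hq1 : 1 ≤ q := Nat.one_le_pow _ _ (Fact.out : p.Prime).pos
  set c₀ := q - 1 - (R - k) with hc₀
  have hc₀Z : (c₀ : ℤ) = q - 1 - R + k := by omega
  -- the alternating antidiagonal through all summands, indexed so that `g (c₀ + j)` is the `j`-th
  -- term of `x_m`; `T^{q-1}` sends the `i`-th summand to its stretch `[iq, iq + q)`
  set g : ℕ → Matrix (Fin r) (Fin s) F := fun j =>
    (-1 : F) ^ (j + c₀) • vv F r s ((j : ℤ) + 1 - c₀) ((t : ℤ) * q + S - j) with hg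
  have hblock : ∀ i ≤ t, (-1 : F) ^ i • (TT F r s ^ (q - 1))
      (vv F r s ((i : ℤ) * q + R + 1 - k) (((t : ℤ) - i) * q + S)) =
        (-1 : F) ^ (R - k) • ∑ u ∈ Finset.range q, g (i * q + u) := by
    intro i hi
    have hiq : i * q ≤ t * q := Nat.mul_le_mul_right q hi
    rw [TT_pow_vv _ (by omega) (by nlinarith), Nat.sub_add_cancel hq1,
      ← Finset.sum_range_reflect, Finset.smul_sum, Finset.smul_sum]
    refine Finset.sum_congr rfl fun u hu => ?_
    have huq := Finset.mem_range.mp hu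
    rw [choose_char_pow_sub_one p n (by omega), smul_smul, smul_smul]
    congr 1
    · have hsq : ((-1 : F) ^ (R - k)) ^ 2 = 1 := by rw [← pow_mul, pow_mul', neg_one_sq, one_pow]
      rw [neg_one_pow_sub (a := q - 1) (b := u) (by omega), pow_add, pow_add, pow_mul',
        neg_one_pow_char_pow F p n, hc₀, neg_one_pow_sub (a := q - 1) (b := R - k) (by omega)]
      linear_combination (-(-1 : F) ^ i * (-1) ^ (q - 1) * (-1) ^ u) * hsq
    · rw [Nat.sub_sub_self (by omega : u ≤ q - 1)]
      congr 1 <;>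
        push_cast [hc₀Z, Nat.cast_sub (by omega : u ≤ q - 1), Nat.cast_sub hq1] <;> ring
  have hc₀S : c₀ ≤ t * q + S := by omega
  set m := t * q + S - c₀ with hm
  have hmZ : ((t : ℤ) - 1) * q + R + S + 1 - k = m := by
    push_cast [hm, Nat.cast_sub hc₀S, hc₀Z]; ring
  have htile : (t + 1) * q = c₀ + m + (q - S) := by rw [Nat.succ_mul]; omega
  have hlow : ∀ j < c₀, g j = 0 := fun j hj => by
    simp only [hg]; rw [vv_eq_zero_of_fst_nonpos _ (by omega), smul_zero]
  have hhigh : ∀ j, g (c₀ + m + j) = 0 := fun j => by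
    simp only [hg]; rw [vv_eq_zero_of_snd_nonpos _ (by push_cast; omega), smul_zero]
  calc (TT F r s ^ (q - 1)) ((-1 : F) ^ (R - k) • ∑ i ∈ Finset.range (t + 1), (-1 : F) ^ i •
          vv F r s ((i : ℤ) * q + R + 1 - k) (((t : ℤ) - i) * q + S))
      = (-1 : F) ^ (R - k) • (-1 : F) ^ (R - k) •
          ∑ j ∈ Finset.range ((t + 1) * q), g j := by
        rw [map_smul]
        congr 1
        rw [map_sum, Finset.sum_range_mul, Finset.smul_sum]
        refine Finset.sum_congr rfl fun i hi => ?_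
        rw [map_smul, hblock i (Nat.lt_succ_iff.mp (Finset.mem_range.mp hi))]
    _ = ∑ j ∈ Finset.range m, g (c₀ + j) := by
        rw [smul_smul, ← pow_add, ← two_mul, pow_mul, neg_one_sq, one_pow, one_smul, htile,
          Finset.sum_range_add, Finset.sum_range_add,
          Finset.sum_eq_zero fun j hj => hlow j (Finset.mem_range.mp hj),
          Finset.sum_eq_zero fun j _ => hhigh j, zero_add, add_zero]
    _ = xx F r s (((t : ℤ) - 1) * q + R + S + 1 - k) := by
        rw [xx, hmZ, Int.toNat_natCast]
        refine Finset.sum_congr rfl fun j hj => ?_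
        simp only [hg]
        congr 1
        · rw [add_comm c₀ j, add_assoc, ← two_mul, pow_add, pow_mul, neg_one_sq, one_pow,
            mul_one]
        · congr 1
          · push_cast; ring
          · push_cast [hm, Nat.cast_sub hc₀S]; ring

theorem TT_pow_mul_char_pow_sum_vv (p : ℕ) [Fact p.Prime] [CharP F p] [NeZero r] [NeZero s]
    (n : ℕ) {a t : ℕ} {c d A B : ℤ} (hcd : (a : ℤ) + t = c + d)
    (hA : A ≤ p ^ n) (hB : B ≤ p ^ n)
    (hAr : (c + t) * p ^ n + A ≤ r) (hBs : d * p ^ n + B ≤ s) (ζ : Fin (t + 1) → F) :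
    (TT F r s ^ (a * p ^ n))
        (∑ i, ζ i • vv F r s ((c + i) * p ^ n + A) ((d - i) * p ^ n + B)) =
      ∑ j : Fin (t + 1), (∑ i : Fin (t + 1), binF F a (c + i - j) * ζ i) •
        vv F r s (j * p ^ n + A) ((t - j) * p ^ n + B) := by
  set block : ℤ → Matrix (Fin r) (Fin s) F :=
    fun e => vv F r s (e * p ^ n + A) ((t - e) * p ^ n + B)
  have hpos : (0 : ℤ) < p ^ n := by have := (Fact.out : p.Prime).pos; positivity
  have hblock : ∀ e, e < 0 ∨ (t : ℤ) < e → block e = 0 := by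
    rintro e (he | he)
    · exact vv_eq_zero_of_fst_nonpos _ (by nlinarith)
    · exact vv_eq_zero_of_snd_nonpos _ (by nlinarith)
  have hterm : ∀ i : Fin (t + 1),
      (TT F r s ^ (a * p ^ n)) (vv F r s ((c + i) * p ^ n + A) ((d - i) * p ^ n + B)) =
      ∑ j : Fin (t + 1), binF F a (c + i - j) • block j := by
    intro i
    have hi : (i : ℤ) ≤ t := by have := i.isLt; omega
    rw [TT_pow_mul_char_pow_vv p a n (by nlinarith) (by nlinarith),
      ← sum_range_choose_smul_eq_sum_binF_smul a t (c + i) block hblock]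
    refine Finset.sum_congr rfl fun w hw => ?_
    have hwa : w ≤ a := Nat.lt_succ_iff.mp (Finset.mem_range.mp hw)
    simp only [block, Nat.cast_sub hwa]
    congr 2
    · ring
    · linear_combination (-(p : ℤ) ^ n) * hcd
  simp_rw [map_sum, map_smul, hterm, Finset.smul_sum, smul_smul]
  rw [Finset.sum_comm]
  simp_rw [← Finset.sum_smul, mul_comm (ζ _)]
  rfl

theorem TT_pow_mul_char_pow_sum_vv_of_mulVec_eq (p : ℕ) [Fact p.Prime] [CharP F p] [NeZero r]
    [NeZero s] (n : ℕ) {rn sn t R S k : ℕ} (htr : t ≤ rn) (hts : t ≤ sn) (hk : 1 ≤ k)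
    (hR : R < p ^ n) (hS : S < p ^ n) (hrd : r = rn * p ^ n + R) (hsd : s = sn * p ^ n + S)
    {M1 : Matrix (Fin (t + 1)) (Fin (t + 1)) F}
    (hM1 : ∀ i j : Fin (t + 1), M1 i j =
      binF F ((rn : ℤ) + sn - 2 * t) ((rn : ℤ) - t + (j : ℤ) - (i : ℤ)))
    {ζ : Fin (t + 1) → F} (hζ : ∀ i, M1.mulVec ζ i = (-1 : F) ^ (i : ℕ)) :
    (TT F r s ^ ((rn + sn - 2 * t) * p ^ n))
        (∑ i : Fin (t + 1), ζ i • vv F r s (((rn : ℤ) - t + (i : ℤ)) * p ^ n + R + 1 - k)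
          (((sn : ℤ) - (i : ℤ)) * p ^ n + S)) =
      ∑ i ∈ Finset.range (t + 1), (-1 : F) ^ i •
        vv F r s ((i : ℤ) * p ^ n + R + 1 - k) (((t : ℤ) - i) * p ^ n + S) := by
  have hRZ : (R : ℤ) < p ^ n := by exact_mod_cast hR
  have hSZ : (S : ℤ) < p ^ n := by exact_mod_cast hS
  have hrow : ((rn : ℤ) - t + t) * p ^ n + (R + 1 - k) ≤ r := by rw [hrd]; push_cast; linarith
  have hcol : (sn : ℤ) * p ^ n + S ≤ s := by rw [hsd]; push_cast; rfl
  simp_rw [← Fin.sum_univ_eq_sum_range, show ∀ i : Fin (t + 1),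
    ((rn : ℤ) - t + i) * p ^ n + R + 1 - k = ((rn : ℤ) - t + i) * p ^ n + (R + 1 - k) from
    fun i => by ring]
  rw [TT_pow_mul_char_pow_sum_vv p n (by omega) (by linarith) hSZ.le hrow hcol]
  refine Finset.sum_congr rfl fun j _ => ?_
  have hrow_j :
      ∑ i : Fin (t + 1), binF F (rn + sn - 2 * t : ℕ) ((rn : ℤ) - t + i - j) * ζ i =
        (-1 : F) ^ (j : ℕ) := by
    rw [← hζ j]
    simp only [Matrix.mulVec, dotProduct, hM1]
    congr! 3
    omega
  rw [hrow_j]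
  congr 2
  ring

end OperatorT

theorem stmt15_general (p : ℕ) (hp : p.Prime) (F : Type*) [Field F] [CharP F p]
    (r s n rn sn R S : ℕ) (hr : 0 < r) (hs : 0 < s)
    (hRp : R < p ^ n) (hSp : S < p ^ n)
    (hrd : r = rn * p ^ n + R) (hsd : s = sn * p ^ n + S)
    (t k l : ℕ) (ht : t ≤ min rn sn)
    (hk1 : 1 ≤ k) (hk2 : k ≤ R + S - p ^ n)
    (hl : l = t * p ^ n + k)
    (hl1 : max ((r : ℤ) + s - p ^ (n + 1)) 0 + 1 ≤ (l : ℤ))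
    (zl : Matrix (Fin r) (Fin s) F)
    (hzl : zl = (-1 : F) ^ (R - k) •
      ∑ i ∈ Finset.range (t + 1), (-1 : F) ^ i •
        vv F r s ((i : ℤ) * p ^ n + R + 1 - k) (((t : ℤ) - i) * p ^ n + S))
    (M1 : Matrix (Fin (t + 1)) (Fin (t + 1)) F)
    (hM1 : ∀ i j : Fin (t + 1), M1 i j =
      binF F ((rn : ℤ) + sn - 2 * t) ((rn : ℤ) - t + (j : ℤ) - (i : ℤ)))
    (X : Fin (t + 1) → F) (hX : ∀ i : Fin (t + 1), X i = (-1 : F) ^ (i : ℕ))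
    (zeta : Fin (t + 1) → F) (hzeta : zeta = M1⁻¹.mulVec X)
    (yl : Matrix (Fin r) (Fin s) F)
    (hyl : yl = (-1 : F) ^ (R - k) •
      ∑ i : Fin (t + 1), zeta i •
        vv F r s (((rn : ℤ) - t + (i : ℤ)) * p ^ n + R + 1 - k)
          (((sn : ℤ) - (i : ℤ)) * p ^ n + S)) :
    ((TT F r s) ^ (p ^ n - 1)) zl
        = xx F r s (((t : ℤ) - 1) * p ^ n + R + S + 1 - k) ∧
      IsUnit M1 ∧
      ((TT F r s) ^ ((rn + sn - 2 * t) * p ^ n)) yl = zl := by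
  have := Fact.mk hp
  have := NeZero.of_pos hr
  have := NeZero.of_pos hs
  have htr : t ≤ rn := ht.trans (min_le_left _ _)
  have hts : t ≤ sn := ht.trans (min_le_right _ _)
  have hrow : t * p ^ n ≤ rn * p ^ n := Nat.mul_le_mul_right _ htr
  have hcol : t * p ^ n ≤ sn * p ^ n := Nat.mul_le_mul_right _ hts
  have hdeg : rn + sn - 2 * t + t < p := by
    by_contra! hle
    have hle' : ((p : ℤ) + t) * p ^ n ≤ ((rn : ℤ) + sn) * p ^ n :=
      mul_le_mul_of_nonneg_right (by omega) (by positivity)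
    have hRS : (k : ℤ) + p ^ n ≤ R + S := by exact_mod_cast (by omega : k + p ^ n ≤ R + S)
    have hmax : (r : ℤ) + s - p ^ (n + 1) + 1 ≤ l := by
      linarith [le_max_left ((r : ℤ) + s - p ^ (n + 1)) 0]
    rw [hrd, hsd, hl] at hmax
    push_cast at hmax
    linarith [pow_succ (p : ℤ) n]
  have hM1unit : IsUnit M1 := by
    have hM1eq : M1 = Matrix.of fun i j : Fin (t + 1) =>
        binF F (rn + sn - 2 * t : ℕ) ((rn - t : ℕ) + j - i) := by
      ext i j
      rw [hM1, Matrix.of_apply]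
      congr 1 <;> omega
    rw [hM1eq]
    exact isUnit_binF_toeplitz p (by omega) hdeg
  have hM1zeta : M1.mulVec zeta = X := by
    rw [hzeta, Matrix.mulVec_mulVec,
      Matrix.mul_nonsing_inv _ ((Matrix.isUnit_iff_isUnit_det M1).mp hM1unit), Matrix.one_mulVec]
  refine ⟨?_, hM1unit, ?_⟩
  · rw [hzl]
    exact TT_pow_char_pow_sub_one_smul_sum_vv p n (by omega) hRp hSp.le (by omega) (by omega)
      (by omega)
  · rw [hyl, hzl, map_smul,
      TT_pow_mul_char_pow_sum_vv_of_mulVec_eq p n htr hts hk1 hRp hSp hrd hsd hM1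
        fun i => by rw [hM1zeta, hX]]

/-- case `1 ≤ k ≤ max(e,0)`. -/
theorem stmt15 (p : ℕ) (hp : p.Prime) (F : Type*) [Field F] [CharP F p]
    (r s n rn sn R S : ℕ) (hr : 0 < r) (hs : 0 < s)
    (hn1 : p ^ n ≤ max r s) (hn2 : max r s < p ^ (n + 1))
    (hrn : rn < p) (hsn : sn < p) (hRp : R < p ^ n) (hSp : S < p ^ n)
    (hrd : r = rn * p ^ n + R) (hsd : s = sn * p ^ n + S)
    (t k l : ℕ) (ht : t ≤ min rn sn)
    (hk1 : 1 ≤ k) (hk2 : k ≤ R + S - p ^ n)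
    (hl : l = t * p ^ n + k)
    (hl1 : max ((r : ℤ) + s - p ^ (n + 1)) 0 + 1 ≤ (l : ℤ)) (hl2 : l ≤ min r s)
    (zl : Matrix (Fin r) (Fin s) F)
    (hzl : zl = (-1 : F) ^ (R - k) •
      ∑ i ∈ Finset.range (t + 1), (-1 : F) ^ i •
        vv F r s ((i : ℤ) * p ^ n + R + 1 - k) (((t : ℤ) - i) * p ^ n + S))
    (M1 : Matrix (Fin (t + 1)) (Fin (t + 1)) F)
    (hM1 : ∀ i j : Fin (t + 1), M1 i j =
      binF F ((rn : ℤ) + sn - 2 * t) ((rn : ℤ) - t + (j : ℤ) - (i : ℤ)))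
    (X : Fin (t + 1) → F) (hX : ∀ i : Fin (t + 1), X i = (-1 : F) ^ (i : ℕ))
    (zeta : Fin (t + 1) → F) (hzeta : zeta = M1⁻¹.mulVec X)
    (yl : Matrix (Fin r) (Fin s) F)
    (hyl : yl = (-1 : F) ^ (R - k) •
      ∑ i : Fin (t + 1), zeta i •
        vv F r s (((rn : ℤ) - t + (i : ℤ)) * p ^ n + R + 1 - k)
          (((sn : ℤ) - (i : ℤ)) * p ^ n + S)) :
    ((TT F r s) ^ (p ^ n - 1)) zl
        = xx F r s (((t : ℤ) - 1) * p ^ n + R + S + 1 - k) ∧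
      IsUnit M1 ∧
      ((TT F r s) ^ ((rn + sn - 2 * t) * p ^ n)) yl = zl :=
  stmt15_general p hp F r s n rn sn R S hr hs hRp hSp hrd hsd t k l ht hk1 hk2 hl hl1 zl hzl M1 hM1
    X hX zeta hzeta yl hyl
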